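/- arXiv:2007.08409 — 6 statements merged into one kernel-verified Lean document; each statement's English description precedes it below -/
import Mathlib

section
/- Let G be a connected graph containing no induced path on 4 vertices (P4) and no induced cycle on 4 vertices (C4). Then G has a dominant vertex, i.e., a vertex adjacent to every other vertex of G. -/
/-!
Take a vertex `u` of maximum degree. If some `x` at distance two from `u` were reached through a
neighbour `w`, then every other neighbour `y` of `u` must be adjacent to `w`: otherwise
`x w u y` is an induced `P₄` (if `x ≁ y`) or `u y x w` an induced `C₄` (if `x ∼ y`). Then `w` is
adjacent to `u`, to `x` and to all of `N(u) \ {w}`, so `deg w > deg u`. Hence no vertex lies at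
distance two from `u`, and by connectivity `u` is dominant.
-/

namespace SimpleGraph

variable {V : Type*} {G : SimpleGraph V}

lemma Reachable.mem_of_adj_closed {s : Set V} (hs : ∀ ⦃a b⦄, a ∈ s → G.Adj a b → b ∈ s)
    {u v : V} (huv : G.Reachable u v) (hu : u ∈ s) : v ∈ s := by
  rw [reachable_iff_reflTransGen] at huv
  induction huv with
  | refl => exact hu
  | tail _ hbc ih => exact hs ih hbc

lemma nonempty_pathGraph_four_embedding {a b c d : V}
    (hab : G.Adj a b) (hbc : G.Adj b c) (hcd : G.Adj c d)
    (hac : ¬ G.Adj a c) (hbd : ¬ G.Adj b d) (had : ¬ G.Adj a d) :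
    Nonempty (pathGraph 4 ↪g G) := by
  have := hab.symm; have := hbc.symm; have := hcd.symm
  have := hab.ne; have := hbc.ne; have := hcd.ne
  refine ⟨⟨⟨![a, b, c, d], fun i j hij => ?_⟩, fun {i j} => ?_⟩⟩
  · fin_cases i <;> fin_cases j <;> simp_all
  · fin_cases i <;> fin_cases j <;> simp [pathGraph_adj, adj_comm] <;> tauto

lemma nonempty_cycleGraph_four_embedding {a b c d : V}
    (hab : G.Adj a b) (hbc : G.Adj b c) (hcd : G.Adj c d) (hda : G.Adj d a)
    (hac : ¬ G.Adj a c) (hbd : ¬ G.Adj b d) (hac' : a ≠ c) (hbd' : b ≠ d) :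
    Nonempty (cycleGraph 4 ↪g G) := by
  have := hab.symm; have := hbc.symm; have := hcd.symm; have := hda.symm
  have := hab.ne; have := hbc.ne; have := hcd.ne; have := hda.ne
  refine ⟨⟨⟨![a, b, c, d], fun i j hij => ?_⟩, fun {i j} => ?_⟩⟩
  · fin_cases i <;> fin_cases j <;> simp_all
  · fin_cases i <;> fin_cases j <;> simp [cycleGraph_adj, Fin.ext_iff, adj_comm] <;> tauto

lemma adj_of_adj_of_adj_of_not_adj (hP4 : ¬ Nonempty (pathGraph 4 ↪g G))
    (hC4 : ¬ Nonempty (cycleGraph 4 ↪g G)) {u w x y : V}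
    (huw : G.Adj u w) (hwx : G.Adj w x) (hxu : x ≠ u) (hux : ¬ G.Adj u x)
    (huy : G.Adj u y) (hyw : y ≠ w) : G.Adj w y := by
  by_contra hwy
  by_cases hxy : G.Adj x y
  · exact hC4 (nonempty_cycleGraph_four_embedding huy hxy.symm hwx.symm huw.symm
      hux (fun h => hwy h.symm) hxu.symm hyw)
  · exact hP4 (nonempty_pathGraph_four_embedding hwx.symm huw.symm huy
      (fun h => hux h.symm) hwy hxy)

lemma degree_lt_degree_of_neighborSet_subset [G.LocallyFinite] {u w x : V}
    (huw : G.Adj u w) (hwx : G.Adj w x) (hxu : x ≠ u) (hux : ¬ G.Adj u x)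
    (hsub : ∀ y, G.Adj u y → y ≠ w → G.Adj w y) : G.degree u < G.degree w := by
  classical
  have hcard : (insert u ((G.neighborFinset u).erase w)).card = G.degree u := by
    rw [Finset.card_insert_of_notMem (by simp), ← card_neighborFinset_eq_degree,
      Finset.card_erase_add_one (by simpa using huw)]
  rw [← hcard, ← card_neighborFinset_eq_degree]
  refine Finset.card_lt_card (Finset.ssubset_iff.2 ⟨x, by simp [hxu, hux], ?_⟩)
  intro z hz
  simp only [Finset.mem_insert, Finset.mem_erase, mem_neighborFinset] at hz ⊢
  rcases hz with rfl | rfl | ⟨hzw, huz⟩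
  · exact hwx
  · exact huw.symm
  · exact hsub z huz hzw

end SimpleGraph

open SimpleGraph in
/-- A connected finite simple graph with no induced `P₄` and no induced `C₄`
has a dominant vertex. -/
theorem connected_p4_c4_free_has_dominant_vertex
    {V : Type*} [Fintype V] (G : SimpleGraph V)
    (hconn : G.Connected)
    (hP4 : ¬ Nonempty (SimpleGraph.pathGraph 4 ↪g G))
    (hC4 : ¬ Nonempty (SimpleGraph.cycleGraph 4 ↪g G)) :
    ∃ u : V, ∀ v : V, v ≠ u → G.Adj u v := by
  classical
  have := hconn.nonempty
  obtain ⟨u, hmax⟩ := Finite.exists_max fun v => G.degree v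
  have hclosed : ∀ ⦃w x⦄, w = u ∨ G.Adj u w → G.Adj w x → x = u ∨ G.Adj u x := by
    rintro w x (rfl | huw) hwx
    · exact Or.inr hwx
    by_contra! ⟨hxu, hux⟩
    exact (hmax w).not_gt <| degree_lt_degree_of_neighborSet_subset huw hwx hxu hux
      fun y huy hyw => adj_of_adj_of_adj_of_not_adj hP4 hC4 huw hwx hxu hux huy hyw
  refine ⟨u, fun v hvu => ?_⟩
  exact ((hconn u v).mem_of_adj_closed (s := {v | v = u ∨ G.Adj u v}) hclosed
    (Or.inl rfl)).resolve_left hvu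
end

section
/- If a nonempty finite simple graph G is not a disjoint union of cliques (equivalently, G contains an induced path on 3 vertices), then the minimum eigenvalue of its adjacency matrix is at most −√2. -/
/-!
If every eigenvalue of the real symmetric matrix `A = G.adjMatrix ℝ` exceeded `-√2`, then
`A + √2 • 1` would be positive definite. But for an induced path `u - v - w` the vector
`z = e_u + e_w - √2 e_v` has `zᵀ A z = -4√2` and `zᵀ z = 4`, so `zᵀ (A + √2 • 1) z = 0`.
-/

open Matrix
open scoped ComplexOrder

theorem Matrix.IsHermitian.posDef_sub_smul_one {𝕜 n : Type*} [RCLike 𝕜] [Fintype n]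
    [DecidableEq n] {A : Matrix n n 𝕜} (hA : A.IsHermitian) {c : ℝ}
    (hc : ∀ (μ : ℝ) (y : n → 𝕜), y ≠ 0 → A *ᵥ y = μ • y → c < μ) :
    (A - c • (1 : Matrix n n 𝕜)).PosDef := by
  have hB : (A - c • (1 : Matrix n n 𝕜)).IsHermitian :=
    hA.sub (isHermitian_one.smul (IsSelfAdjoint.all c))
  rw [hB.posDef_iff_eigenvalues_pos]
  intro j
  set y := ⇑(hB.eigenvectorBasis j)
  have hy : y ≠ 0 := by
    simpa [y] using hB.eigenvectorBasis.orthonormal.ne_zero j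
  have hAy : A *ᵥ y = (hB.eigenvalues j + c) • y := by
    have := hB.mulVec_eigenvectorBasis j
    rw [sub_mulVec, smul_mulVec, one_mulVec] at this
    rw [add_smul, ← this, sub_add_cancel]
  linarith [hc _ y hy hAy]

theorem SimpleGraph.dotProduct_adjMatrix_mulVec_of_induced_path {V R : Type*} [Fintype V]
    [DecidableEq V] [CommRing R] (G : SimpleGraph V) [DecidableRel G.Adj] {u v w : V}
    (huv : G.Adj u v) (hvw : G.Adj v w) (huw : ¬G.Adj u w) (t : R) :
    let z := Pi.single u 1 + Pi.single w 1 + Pi.single v t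
    z ⬝ᵥ (G.adjMatrix R *ᵥ z) = 4 * t := by
  have hwu : ¬G.Adj w u := fun h => huw h.symm
  simp only [mulVec_add, mulVec_single, dotProduct_add, add_dotProduct, single_dotProduct,
    Pi.smul_apply, col_apply, MulOpposite.smul_eq_mul_unop, MulOpposite.unop_op, adjMatrix_apply,
    G.irrefl, huv, hvw, huw, hwu, huv.symm, hvw.symm, ↓reduceIte]
  ring

theorem dotProduct_self_single_add_single_add_single {n R : Type*} [Fintype n] [DecidableEq n]
    [CommRing R] {u v w : n} (huv : u ≠ v) (hvw : v ≠ w) (huw : u ≠ w) (t : R) :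
    let z := Pi.single u 1 + Pi.single w 1 + Pi.single v t
    z ⬝ᵥ z = 2 + t ^ 2 := by
  simp only [dotProduct_add, add_dotProduct, single_dotProduct, Pi.single_apply,
    huv, hvw, huw, huv.symm, hvw.symm, huw.symm, ↓reduceIte]
  ring

/-- If a nonempty finite simple graph is not a disjoint union of cliques
(equivalently, it contains an induced path on 3 vertices), then the minimum
eigenvalue of its adjacency matrix is at most `-√2`. -/
theorem min_eigenvalue_le_neg_sqrt_two
    {V : Type*} [Fintype V] [DecidableEq V]
    (G : SimpleGraph V) [DecidableRel G.Adj]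
    (hP3 : ∃ u v w : V, G.Adj u v ∧ G.Adj v w ∧ ¬ G.Adj u w ∧ u ≠ w) :
    ∃ μ : ℝ, (∃ x : V → ℝ, x ≠ 0 ∧ G.adjMatrix ℝ *ᵥ x = μ • x) ∧
      μ ≤ -Real.sqrt 2 := by
  obtain ⟨u, v, w, huv, hvw, huw, hne⟩ := hP3
  by_contra! h
  have hpos := (G.isHermitian_adjMatrix ℝ).posDef_sub_smul_one fun μ y hy hAy => h μ ⟨y, hy, hAy⟩
  set z : V → ℝ := Pi.single u 1 + Pi.single w 1 + Pi.single v (-√2)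
  have hzAz : z ⬝ᵥ (G.adjMatrix ℝ *ᵥ z) = 4 * -√2 :=
    G.dotProduct_adjMatrix_mulVec_of_induced_path huv hvw huw _
  have hzz : z ⬝ᵥ z = 2 + (-√2) ^ 2 :=
    dotProduct_self_single_add_single_add_single huv.ne hvw.ne hne _
  have hz : z ≠ 0 := fun h0 => by norm_num [h0] at hzz
  have hzero : z ⬝ᵥ ((G.adjMatrix ℝ - (-√2) • 1) *ᵥ z) = 0 := by
    rw [sub_mulVec, dotProduct_sub, smul_mulVec, one_mulVec, dotProduct_smul, hzAz, hzz,
      smul_eq_mul, neg_sq, Real.sq_sqrt zero_le_two]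
    ring
  have hzpos := hpos.dotProduct_mulVec_pos hz
  rw [star_trivial, hzero] at hzpos
  exact lt_irrefl 0 hzpos
end

section
/- Let M₁ ∈ ℝ^{m×m} and M₂ ∈ ℝ^{n×n} be symmetric matrices, and let M = M₁ ⊕ M₂ be their block-diagonal direct sum. Define g(N) := min over the standard simplex of xᵀNx for a symmetric matrix N. If g(M₁) > 0 and g(M₂) > 0, then 1/g(M) = 1/g(M₁) + 1/g(M₂). -/
/-!
A simplex point of the block sum splits as `(a • u, b • v)` with `u, v` in the two smaller
simplices and `a + b = 1`, and its value is `a² uᵀM₁u + b² vᵀM₂v ≥ a² g₁ + b² g₂`. Minimising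
`a² g₁ + b² g₂` over `a + b = 1` gives `g₁ g₂ / (g₁ + g₂)`, attained at `a : b = g₂ : g₁` by
scaling minimisers of the two blocks; this is `1/g = 1/g₁ + 1/g₂`.
-/

open Matrix

section QuadraticForm

variable {ι κ R : Type*} [Fintype ι] [Fintype κ]

lemma sumElim_dotProduct_fromBlocks_mulVec_sumElim [NonUnitalNonAssocSemiring R]
    (A : Matrix ι ι R) (B : Matrix κ κ R) (u : ι → R) (v : κ → R) :
    Sum.elim u v ⬝ᵥ (fromBlocks A 0 0 B *ᵥ Sum.elim u v) = u ⬝ᵥ (A *ᵥ u) + v ⬝ᵥ (B *ᵥ v) := by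
  rw [fromBlocks_mulVec, sumElim_dotProduct_sumElim]
  simp

lemma smul_dotProduct_mulVec_smul [CommSemiring R] (M : Matrix ι ι R) (c : R) (x : ι → R) :
    (c • x) ⬝ᵥ (M *ᵥ (c • x)) = c ^ 2 * (x ⬝ᵥ (M *ᵥ x)) := by
  rw [mulVec_smul, smul_dotProduct, dotProduct_smul, smul_eq_mul, smul_eq_mul, sq, mul_assoc]

end QuadraticForm

section Simplex

variable {ι κ : Type*} [Fintype ι] [Fintype κ]

lemma sumElim_smul_mem_stdSimplex {u : ι → ℝ} {v : κ → ℝ} (hu : u ∈ stdSimplex ℝ ι)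
    (hv : v ∈ stdSimplex ℝ κ) {a b : ℝ} (ha : 0 ≤ a) (hb : 0 ≤ b) (hab : a + b = 1) :
    Sum.elim (a • u) (b • v) ∈ stdSimplex ℝ (ι ⊕ κ) := by
  refine ⟨fun i => ?_, ?_⟩
  · rcases i with i | i
    · exact mul_nonneg ha (hu.1 i)
    · exact mul_nonneg hb (hv.1 i)
  · simp only [Fintype.sum_sum_type, Sum.elim_inl, Sum.elim_inr, Pi.smul_apply, smul_eq_mul,
      ← Finset.mul_sum, hu.2, hv.2, mul_one, hab]

lemma sq_sum_mul_le_dotProduct_mulVec {M : Matrix ι ι ℝ} {g : ℝ}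
    (hg : IsLeast ((fun x => x ⬝ᵥ (M *ᵥ x)) '' stdSimplex ℝ ι) g)
    {u : ι → ℝ} (hu : ∀ i, 0 ≤ u i) :
    (∑ i, u i) ^ 2 * g ≤ u ⬝ᵥ (M *ᵥ u) := by
  generalize hsum : ∑ i, u i = a
  rcases (hsum ▸ Finset.sum_nonneg fun i _ => hu i : 0 ≤ a).eq_or_lt with ha | ha
  · have hu0 : u = 0 := funext fun i =>
      (Finset.sum_eq_zero_iff_of_nonneg fun i _ => hu i).mp (hsum.trans ha.symm) i
        (Finset.mem_univ i)
    simp [hu0, ← ha]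
  · have hmem : a⁻¹ • u ∈ stdSimplex ℝ ι :=
      ⟨fun i => mul_nonneg (inv_nonneg.mpr ha.le) (hu i), by
        simp only [Pi.smul_apply, smul_eq_mul, ← Finset.mul_sum, hsum, inv_mul_cancel₀ ha.ne']⟩
    have hle : g ≤ (a⁻¹ • u) ⬝ᵥ (M *ᵥ (a⁻¹ • u)) := hg.2 ⟨_, hmem, rfl⟩
    rw [smul_dotProduct_mulVec_smul] at hle
    calc a ^ 2 * g ≤ a ^ 2 * (a⁻¹ ^ 2 * (u ⬝ᵥ (M *ᵥ u))) := by gcongr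
      _ = u ⬝ᵥ (M *ᵥ u) := by field_simp

end Simplex

lemma div_add_le_sq_mul_add_sq_mul {g₁ g₂ a b : ℝ} (hg₁ : 0 < g₁) (hg₂ : 0 < g₂)
    (hab : a + b = 1) :
    g₁ * g₂ / (g₁ + g₂) ≤ a ^ 2 * g₁ + b ^ 2 * g₂ := by
  rw [div_le_iff₀ (by positivity)]
  have hmul : g₁ * g₂ = g₁ * g₂ * (a + b) ^ 2 := by rw [hab]; ring
  nlinarith [sq_nonneg (a * g₁ - b * g₂)]

lemma sq_mul_add_sq_mul_of_div_add {g₁ g₂ : ℝ} (hg : g₁ + g₂ ≠ 0) :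
    (g₂ / (g₁ + g₂)) ^ 2 * g₁ + (g₁ / (g₁ + g₂)) ^ 2 * g₂ = g₁ * g₂ / (g₁ + g₂) := by
  field_simp
  ring

lemma isLeast_dotProduct_fromBlocks_mulVec {ι κ : Type*} [Fintype ι] [Fintype κ]
    {M₁ : Matrix ι ι ℝ} {M₂ : Matrix κ κ ℝ} {g₁ g₂ : ℝ}
    (hg₁ : IsLeast ((fun x => x ⬝ᵥ (M₁ *ᵥ x)) '' stdSimplex ℝ ι) g₁)
    (hg₂ : IsLeast ((fun x => x ⬝ᵥ (M₂ *ᵥ x)) '' stdSimplex ℝ κ) g₂)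
    (hg₁pos : 0 < g₁) (hg₂pos : 0 < g₂) :
    IsLeast ((fun x => x ⬝ᵥ (fromBlocks M₁ 0 0 M₂ *ᵥ x)) '' stdSimplex ℝ (ι ⊕ κ))
      (g₁ * g₂ / (g₁ + g₂)) := by
  have hsum : 0 < g₁ + g₂ := add_pos hg₁pos hg₂pos
  constructor
  · obtain ⟨u, hu, hu₁⟩ := hg₁.1
    obtain ⟨v, hv, hv₂⟩ := hg₂.1
    refine ⟨_, sumElim_smul_mem_stdSimplex hu hv (a := g₂ / (g₁ + g₂)) (b := g₁ / (g₁ + g₂))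
      (by positivity) (by positivity) (by field_simp; ring), ?_⟩
    dsimp only at hu₁ hv₂ ⊢
    rw [sumElim_dotProduct_fromBlocks_mulVec_sumElim, smul_dotProduct_mulVec_smul,
      smul_dotProduct_mulVec_smul, hu₁, hv₂]
    exact sq_mul_add_sq_mul_of_div_add hsum.ne'
  · rintro _ ⟨y, hy, rfl⟩
    dsimp only
    rw [← Sum.elim_comp_inl_inr y, sumElim_dotProduct_fromBlocks_mulVec_sumElim]
    have hmass : ∑ i, y (Sum.inl i) + ∑ j, y (Sum.inr j) = 1 := by
      rw [← Fintype.sum_sum_type]; exact hy.2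
    calc g₁ * g₂ / (g₁ + g₂)
        ≤ (∑ i, y (Sum.inl i)) ^ 2 * g₁ + (∑ j, y (Sum.inr j)) ^ 2 * g₂ :=
          div_add_le_sq_mul_add_sq_mul hg₁pos hg₂pos hmass
      _ ≤ _ := add_le_add (sq_sum_mul_le_dotProduct_mulVec hg₁ fun i => hy.1 _)
          (sq_sum_mul_le_dotProduct_mulVec hg₂ fun j => hy.1 _)

theorem blockDiag_quadratic_min_reciprocal_general {m n : ℕ}
    (M₁ : Matrix (Fin m) (Fin m) ℝ) (M₂ : Matrix (Fin n) (Fin n) ℝ)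
    (g₁ g₂ g : ℝ)
    (hg₁ : IsLeast ((fun x => x ⬝ᵥ (M₁ *ᵥ x)) '' stdSimplex ℝ (Fin m)) g₁)
    (hg₂ : IsLeast ((fun x => x ⬝ᵥ (M₂ *ᵥ x)) '' stdSimplex ℝ (Fin n)) g₂)
    (hg : IsLeast ((fun x => x ⬝ᵥ (Matrix.fromBlocks M₁ 0 0 M₂ *ᵥ x)) ''
        stdSimplex ℝ (Fin m ⊕ Fin n)) g)
    (hg₁pos : 0 < g₁) (hg₂pos : 0 < g₂) :
    1 / g = 1 / g₁ + 1 / g₂ := by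
  rw [hg.unique (isLeast_dotProduct_fromBlocks_mulVec hg₁ hg₂ hg₁pos hg₂pos)]
  field_simp
  ring

/-- For symmetric `M₁, M₂` with positive simplex-minima `g₁, g₂`, the
simplex-minimum `g` of the block direct sum `M₁ ⊕ M₂` satisfies
`1/g = 1/g₁ + 1/g₂`. -/
theorem blockDiag_quadratic_min_reciprocal {m n : ℕ}
    (M₁ : Matrix (Fin m) (Fin m) ℝ) (M₂ : Matrix (Fin n) (Fin n) ℝ)
    (hM₁ : M₁.IsSymm) (hM₂ : M₂.IsSymm)
    (g₁ g₂ g : ℝ)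
    (hg₁ : IsLeast ((fun x => x ⬝ᵥ (M₁ *ᵥ x)) '' stdSimplex ℝ (Fin m)) g₁)
    (hg₂ : IsLeast ((fun x => x ⬝ᵥ (M₂ *ᵥ x)) '' stdSimplex ℝ (Fin n)) g₂)
    (hg : IsLeast ((fun x => x ⬝ᵥ (Matrix.fromBlocks M₁ 0 0 M₂ *ᵥ x)) ''
        stdSimplex ℝ (Fin m ⊕ Fin n)) g)
    (hg₁pos : 0 < g₁) (hg₂pos : 0 < g₂) :
    1 / g = 1 / g₁ + 1 / g₂ :=
  blockDiag_quadratic_min_reciprocal_general M₁ M₂ g₁ g₂ g hg₁ hg₂ hg hg₁pos hg₂pos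
end

section
/- Let M ∈ ℝ^{n×n} (n ≥ 2) be symmetric with entries in [0,1], and let x ∈ Δ be a minimizer of yᵀMy over the standard simplex Δ with x(u) > 0 for all u, so that Mx = g·𝟙 where g = xᵀMx. Fix a coordinate u with x(u) < 1. Then the minimum of yᵀMy over those y ∈ Δ with y(u) = 0 is at most g + x(u)²/(1−x(u))², as witnessed by the vector y defined by y(u)=0 and y(v) = x(v)/(1−x(u)) for v ≠ u. -/
/-!
With `c = 1 - x u`, the witness is `y = c⁻¹ • (x - x u • eᵤ)`. Because `M` is symmetric and
`M x = g • 𝟙`, expanding the quadratic form gives `yᵀ M y = c⁻² (g - 2 x(u) g + x(u)² M u u)`;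
then `M u u ≤ 1` and `g = (M x) u ≥ 0` bound this by `c⁻² (g c² + x(u)²)`.
-/

open Matrix

namespace Matrix

variable {ι R : Type*} [Fintype ι] [DecidableEq ι] [CommRing R]

theorem IsSymm.dotProduct_mulVec_sub_single {M : Matrix ι ι R} (hM : M.IsSymm) (x : ι → R)
    (u : ι) (a : R) :
    (x - Pi.single u a) ⬝ᵥ (M *ᵥ (x - Pi.single u a)) =
      x ⬝ᵥ (M *ᵥ x) - 2 * a * (M *ᵥ x) u + a ^ 2 * M u u := by
  have hcross : x ⬝ᵥ (M *ᵥ Pi.single u a) = a * (M *ᵥ x) u := by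
    rw [dotProduct_mulVec, dotProduct_single, ← mulVec_transpose, hM.eq, mul_comm]
  have hdiag : (M *ᵥ Pi.single u a) u = M u u * a := dotProduct_single _ _ _
  rw [mulVec_sub, sub_dotProduct, dotProduct_sub, dotProduct_sub, hcross, single_dotProduct,
    single_dotProduct, hdiag]
  ring

end Matrix

theorem inv_smul_sub_single_mem_stdSimplex {ι : Type*} [Fintype ι] [DecidableEq ι] {x : ι → ℝ}
    (hx : x ∈ stdSimplex ℝ ι) (u : ι) (hu : x u < 1) :
    (1 - x u)⁻¹ • (x - Pi.single u (x u)) ∈ stdSimplex ℝ ι := by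
  have hc : 0 < 1 - x u := by linarith
  refine ⟨fun v => ?_, ?_⟩
  · rcases eq_or_ne v u with rfl | hv
    · simp
    · simpa [hv] using mul_nonneg (inv_nonneg.2 hc.le) (hx.1 v)
  · simp [← Finset.mul_sum, Finset.sum_sub_distrib, hx.2, hc.ne']

theorem rescaled_quadratic_le {g t m : ℝ} (hg : 0 ≤ g) (hm : m ≤ 1) (ht : t < 1) :
    (1 - t)⁻¹ * ((1 - t)⁻¹ * (g - 2 * t * g + t ^ 2 * m)) ≤ g + t ^ 2 / (1 - t) ^ 2 := by
  have hc : 0 < 1 - t := by linarith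
  calc (1 - t)⁻¹ * ((1 - t)⁻¹ * (g - 2 * t * g + t ^ 2 * m))
      ≤ (1 - t)⁻¹ * ((1 - t)⁻¹ * (g * (1 - t) ^ 2 + t ^ 2)) := by
        gcongr
        · nlinarith [mul_nonneg hg (sq_nonneg t)]
        · exact mul_le_of_le_one_right (sq_nonneg t) hm
    _ = g + t ^ 2 / (1 - t) ^ 2 := by field_simp

theorem delete_vertex_quadratic_bound_general {n : ℕ}
    (M : Matrix (Fin n) (Fin n) ℝ) (hM : M.IsSymm)
    (hentries : ∀ i j : Fin n, M i j ∈ Set.Icc (0 : ℝ) 1)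
    (x : Fin n → ℝ) (hx : x ∈ stdSimplex ℝ (Fin n))
    (g : ℝ) (hg : g = x ⬝ᵥ (M *ᵥ x))
    (hbal : M *ᵥ x = fun _ => g)
    (u : Fin n) (hu : x u < 1)
    (y : Fin n → ℝ) (hy : y = fun v => if v = u then 0 else x v / (1 - x u)) :
    y ∈ stdSimplex ℝ (Fin n) ∧ y u = 0 ∧
      y ⬝ᵥ (M *ᵥ y) ≤ g + (x u) ^ 2 / (1 - x u) ^ 2 := by
  have hy' : y = (1 - x u)⁻¹ • (x - Pi.single u (x u)) := by
    subst hy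
    ext v
    rcases eq_or_ne v u with rfl | hv
    · simp
    · simp [hv, div_eq_inv_mul]
  have hg_nonneg : 0 ≤ g :=
    congrFun hbal u ▸ dotProduct_nonneg_of_nonneg (fun j => (hentries u j).1) hx.1
  refine ⟨hy' ▸ inv_smul_sub_single_mem_stdSimplex hx u hu, by simp [hy], ?_⟩
  rw [hy', mulVec_smul, smul_dotProduct, dotProduct_smul, smul_eq_mul, smul_eq_mul,
    hM.dotProduct_mulVec_sub_single, ← hg, hbal]
  exact rescaled_quadratic_le hg_nonneg (hentries u u).2 hu

/-- Deleting a low-weight coordinate: if `x` is a full-support minimizer of the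
quadratic form of a symmetric matrix `M` with entries in `[0,1]` over the
standard simplex (with `Mx = g·𝟙`, `g = xᵀMx`), and `x u < 1`, then the
rescaled vector supported off `u` witnesses that the minimum over the face
`{y ∈ Δ : y u = 0}` is at most `g + x(u)²/(1-x(u))²`. -/
theorem delete_vertex_quadratic_bound {n : ℕ} (hn : 2 ≤ n)
    (M : Matrix (Fin n) (Fin n) ℝ) (hM : M.IsSymm)
    (hentries : ∀ i j : Fin n, M i j ∈ Set.Icc (0 : ℝ) 1)
    (x : Fin n → ℝ) (hx : x ∈ stdSimplex ℝ (Fin n))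
    (hpos : ∀ u : Fin n, 0 < x u)
    (hmin : ∀ z ∈ stdSimplex ℝ (Fin n), x ⬝ᵥ (M *ᵥ x) ≤ z ⬝ᵥ (M *ᵥ z))
    (g : ℝ) (hg : g = x ⬝ᵥ (M *ᵥ x))
    (hbal : M *ᵥ x = fun _ => g)
    (u : Fin n) (hu : x u < 1)
    (y : Fin n → ℝ) (hy : y = fun v => if v = u then 0 else x v / (1 - x u)) :
    y ∈ stdSimplex ℝ (Fin n) ∧ y u = 0 ∧
      y ⬝ᵥ (M *ᵥ y) ≤ g + (x u) ^ 2 / (1 - x u) ^ 2 :=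
  delete_vertex_quadratic_bound_general M hM hentries x hx g hg hbal u hu y hy
end

section
/- Fix p ∈ (1/3, 1/2). Let M ∈ ℝ^{n×n} be symmetric with diagonal entries equal to 1−p and off-diagonal entries in {0, p}, and suppose some row u of M has all off-diagonal entries in that row equal to p (a 'dominant vertex'). Let x ∈ Δ be a minimizer of yᵀMy over the standard simplex with all coordinates positive, and g = xᵀMx. Then g > p. If additionally n ≥ 2 and there exist two indices v ≠ w with M(v,w) = 0, then g < (1−p)/2, contradicting g > p; hence no such pair exists, i.e., all off-diagonal entries of M equal p. -/
/-!
At a minimizer `x` of `y ↦ yᵀMy` on the simplex (`M` symmetric), moving mass towards a vertex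
`eᵢ` cannot decrease the form, which forces `(Mx)ᵢ ≥ xᵀMx = g` for all `i`; since `g` is the
`x`-average of the `(Mx)ᵢ`, equality holds wherever `xᵢ > 0`. For a dominant vertex `u` this
reads `g = (Mx)ᵤ = p + (1 - 2p) xᵤ > p`. A gray pair `M v w = 0` would instead give the test
point `(e_v + e_w) / 2` the value `(1 - p) / 2 < p`, below the minimum.
-/

open Matrix

lemma nonneg_of_forall_add_mul_nonneg {a b : ℝ} (h : ∀ t ∈ Set.Ioc (0 : ℝ) 1, 0 ≤ a + t * b) :
    0 ≤ a := by
  by_contra! ha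
  have hb : -a ≤ b := by linarith [h 1 ⟨one_pos, le_rfl⟩]
  have hb0 : 0 < b := by linarith
  have ht : -a / (2 * b) ∈ Set.Ioc (0 : ℝ) 1 :=
    ⟨div_pos (by linarith) (by linarith), by rw [div_le_one (by linarith)]; linarith⟩
  have := h _ ht
  rw [div_mul_eq_mul_div, mul_div_mul_right _ _ hb0.ne'] at this
  linarith

namespace Matrix

variable {ι : Type*} [Fintype ι]

lemma IsSymm.smul_add_smul_dotProduct_mulVec {M : Matrix ι ι ℝ} (hM : M.IsSymm)
    (a b : ℝ) (y z : ι → ℝ) :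
    (a • y + b • z) ⬝ᵥ (M *ᵥ (a • y + b • z)) =
      a ^ 2 * (y ⬝ᵥ (M *ᵥ y)) + 2 * a * b * (z ⬝ᵥ (M *ᵥ y)) + b ^ 2 * (z ⬝ᵥ (M *ᵥ z)) := by
  have hswap : y ⬝ᵥ (M *ᵥ z) = z ⬝ᵥ (M *ᵥ y) := by
    rw [dotProduct_mulVec, ← mulVec_transpose, hM.eq, dotProduct_comm]
  simp only [mulVec_add, mulVec_smul, dotProduct_add, add_dotProduct, dotProduct_smul,
    smul_dotProduct, smul_eq_mul, hswap]
  ring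

lemma single_one_dotProduct_mulVec_single_one [DecidableEq ι] (M : Matrix ι ι ℝ) (i j : ι) :
    Pi.single i 1 ⬝ᵥ (M *ᵥ Pi.single j 1) = M i j := by
  rw [single_one_dotProduct, mulVec_single_one, col_apply]

lemma mulVec_apply_of_row_eq_off_diag [DecidableEq ι] {M : Matrix ι ι ℝ} {u : ι} {p : ℝ}
    (hrow : ∀ v, v ≠ u → M u v = p) (x : ι → ℝ) :
    (M *ᵥ x) u = p * ∑ v, x v + (M u u - p) * x u := by
  rw [mulVec, dotProduct, ← Finset.add_sum_erase _ _ (Finset.mem_univ u),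
    ← Finset.add_sum_erase _ _ (Finset.mem_univ u),
    Finset.sum_congr rfl fun v hv => by rw [hrow v (Finset.ne_of_mem_erase hv)], ← Finset.mul_sum]
  ring

end Matrix

section SimplexMinimizer

variable {ι : Type*} [Fintype ι] [DecidableEq ι] {M : Matrix ι ι ℝ} {x : ι → ℝ}

lemma le_mulVec_apply_of_isMinOn (hM : M.IsSymm) (hx : x ∈ stdSimplex ℝ ι)
    (hmin : IsMinOn (fun y ↦ y ⬝ᵥ (M *ᵥ y)) (stdSimplex ℝ ι) x) (i : ι) :
    x ⬝ᵥ (M *ᵥ x) ≤ (M *ᵥ x) i := by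
  set g := x ⬝ᵥ (M *ᵥ x)
  set c := (M *ᵥ x) i
  rw [← sub_nonneg]
  refine nonneg_of_forall_add_mul_nonneg (b := (g - 2 * c + M i i) / 2) fun t ht ↦ ?_
  have hy : (1 - t) • x + t • Pi.single i 1 ∈ stdSimplex ℝ ι :=
    convex_stdSimplex ℝ ι hx (single_mem_stdSimplex ℝ i) (by linarith [ht.2]) ht.1.le (by ring)
  have hle : g ≤ (1 - t) ^ 2 * g + 2 * (1 - t) * t * c + t ^ 2 * M i i := by
    simpa [hM.smul_add_smul_dotProduct_mulVec, single_one_dotProduct_mulVec_single_one,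
      single_one_dotProduct] using isMinOn_iff.mp hmin _ hy
  -- `hle` says `0 ≤ t * (2 * (c - g) + t * (g - 2 * c + M i i))` and `t > 0`
  nlinarith [ht.1]

lemma mulVec_apply_eq_of_isMinOn (hM : M.IsSymm) (hx : x ∈ stdSimplex ℝ ι)
    (hmin : IsMinOn (fun y ↦ y ⬝ᵥ (M *ᵥ y)) (stdSimplex ℝ ι) x) {i : ι} (hi : 0 < x i) :
    (M *ᵥ x) i = x ⬝ᵥ (M *ᵥ x) := by
  set g := x ⬝ᵥ (M *ᵥ x)
  have hslack : ∀ j ∈ Finset.univ, 0 ≤ x j * ((M *ᵥ x) j - g) := fun j _ ↦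
    mul_nonneg (hx.1 j) (sub_nonneg.mpr (le_mulVec_apply_of_isMinOn hM hx hmin j))
  have hsum : ∑ j, x j * ((M *ᵥ x) j - g) = 0 := by
    simp only [mul_sub, Finset.sum_sub_distrib, ← Finset.sum_mul, hx.2]
    simp [g, dotProduct]
  have := (Finset.sum_eq_zero_iff_of_nonneg hslack).mp hsum i (Finset.mem_univ i)
  linarith [(mul_eq_zero.mp this).resolve_left hi.ne']

lemma le_pair_average_of_isMinOn (hM : M.IsSymm)
    (hmin : IsMinOn (fun y ↦ y ⬝ᵥ (M *ᵥ y)) (stdSimplex ℝ ι) x) (v w : ι) :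
    x ⬝ᵥ (M *ᵥ x) ≤ (M v v + 2 * M v w + M w w) / 4 := by
  have hmid : (1 / 2 : ℝ) • Pi.single v 1 + (1 / 2 : ℝ) • Pi.single w 1 ∈ stdSimplex ℝ ι :=
    convex_stdSimplex ℝ ι (single_mem_stdSimplex ℝ v) (single_mem_stdSimplex ℝ w)
      (by norm_num) (by norm_num) (by norm_num)
  have := isMinOn_iff.mp hmin _ hmid
  rw [hM.smul_add_smul_dotProduct_mulVec] at this
  simp only [single_one_dotProduct_mulVec_single_one, hM.apply] at this
  linarith

end SimplexMinimizer

theorem dominant_vertex_forces_dalmatian_general {n : ℕ}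
    (p : ℝ) (hp : p ∈ Set.Ioo (1 / 3 : ℝ) (1 / 2))
    (M : Matrix (Fin n) (Fin n) ℝ) (hM : M.IsSymm)
    (hdiag : ∀ i : Fin n, M i i = 1 - p)
    (hoff : ∀ i j : Fin n, i ≠ j → M i j = 0 ∨ M i j = p)
    (u : Fin n) (hdom : ∀ v : Fin n, v ≠ u → M u v = p)
    (x : Fin n → ℝ) (hx : x ∈ stdSimplex ℝ (Fin n))
    (hpos : ∀ v : Fin n, 0 < x v)
    (hmin : ∀ y ∈ stdSimplex ℝ (Fin n), x ⬝ᵥ (M *ᵥ x) ≤ y ⬝ᵥ (M *ᵥ y))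
    (g : ℝ) (hg : g = x ⬝ᵥ (M *ᵥ x)) :
    p < g ∧
    (∀ v w : Fin n, v ≠ w → M v w = 0 → g < (1 - p) / 2) ∧
    (∀ v w : Fin n, v ≠ w → M v w = p) := by
  obtain ⟨hp1, hp2⟩ := hp
  have hmin' : IsMinOn (fun y ↦ y ⬝ᵥ (M *ᵥ y)) (stdSimplex ℝ (Fin n)) x := isMinOn_iff.mpr hmin
  have hpg : p < g := by
    have hu := mulVec_apply_eq_of_isMinOn hM hx hmin' (hpos u)
    rw [mulVec_apply_of_row_eq_off_diag hdom, hx.2, hdiag, ← hg] at hu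
    nlinarith [hpos u]
  have no_gray : ∀ v w, M v w ≠ 0 := fun v w hvw ↦ by
    have := le_pair_average_of_isMinOn hM hmin' v w
    rw [hvw, hdiag, hdiag, ← hg] at this
    linarith
  exact ⟨hpg, fun v w _ hvw ↦ absurd hvw (no_gray v w),
    fun v w hvw ↦ (hoff v w hvw).resolve_left (no_gray v w)⟩

/-- For `p ∈ (1/3, 1/2)`: a CRG-type matrix (diagonal `1-p`, off-diagonal
entries in `{0,p}`) possessing a dominant row, whose simplex minimum `g` is
attained only at full-support vectors, satisfies `g > p`; any gray pair
`M v w = 0` would force `g < (1-p)/2`, a contradiction, so all off-diagonal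
entries equal `p`. -/
theorem dominant_vertex_forces_dalmatian {n : ℕ}
    (p : ℝ) (hp : p ∈ Set.Ioo (1 / 3 : ℝ) (1 / 2))
    (M : Matrix (Fin n) (Fin n) ℝ) (hM : M.IsSymm)
    (hdiag : ∀ i : Fin n, M i i = 1 - p)
    (hoff : ∀ i j : Fin n, i ≠ j → M i j = 0 ∨ M i j = p)
    (u : Fin n) (hdom : ∀ v : Fin n, v ≠ u → M u v = p)
    (x : Fin n → ℝ) (hx : x ∈ stdSimplex ℝ (Fin n))
    (hpos : ∀ v : Fin n, 0 < x v)
    (hmin : ∀ y ∈ stdSimplex ℝ (Fin n), x ⬝ᵥ (M *ᵥ x) ≤ y ⬝ᵥ (M *ᵥ y))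
    (g : ℝ) (hg : g = x ⬝ᵥ (M *ᵥ x))
    (hcore : ∀ y ∈ stdSimplex ℝ (Fin n), y ⬝ᵥ (M *ᵥ y) = g → ∀ v : Fin n, 0 < y v) :
    p < g ∧
    (∀ v w : Fin n, v ≠ w → M v w = 0 → g < (1 - p) / 2) ∧
    (∀ v w : Fin n, v ≠ w → M v w = p) :=
  dominant_vertex_forces_dalmatian_general p hp M hM hdiag hoff u hdom x hx hpos hmin g hg
end

section
/- Let φ = (1+√5)/2. For p ∈ (0, 1−1/φ), the matrix M = (1−p)I + pA, where A is the adjacency matrix of the path P4, has the property that the unique minimizer x of yᵀMy over the standard simplex Δ ⊂ ℝ⁴ has all four coordinates strictly positive. -/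
/-!
The least eigenvalue of the adjacency matrix of `P₄` is `-φ`, so `M = (1 - p) I + p A` is positive
definite exactly when `p φ² < 1`, i.e. `p < 1 - 1/φ`. The positive vector
`x ∝ (1 - p, 1 - 2p, 1 - 2p, 1 - p)` satisfies `M x = c 𝟙`, hence for `y` in the simplex
`yᵀMy = xᵀMx + (y - x)ᵀM(y - x)`, and positive definiteness makes `x` the unique minimizer.
-/

open Matrix

section MinimizerOnHyperplane

variable {ι : Type*} [Fintype ι] {M : Matrix ι ι ℝ} {x y : ι → ℝ} {c : ℝ}

lemma dotProduct_mulVec_eq_add_of_mulVec_eq_const (hM : M.IsSymm)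
    (hMx : M *ᵥ x = fun _ ↦ c) (hsum : ∑ i, y i = ∑ i, x i) :
    y ⬝ᵥ (M *ᵥ y) = x ⬝ᵥ (M *ᵥ x) + (y - x) ⬝ᵥ (M *ᵥ (y - x)) := by
  set d := y - x
  have hd : d ⬝ᵥ (M *ᵥ x) = 0 := by
    simp [hMx, dotProduct, ← Finset.sum_mul, d, Finset.sum_sub_distrib, hsum]
  have hsymm : x ⬝ᵥ (M *ᵥ d) = d ⬝ᵥ (M *ᵥ x) := by
    rw [dotProduct_mulVec, ← mulVec_transpose, hM.eq, dotProduct_comm]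
  have hy : y = x + d := by simp [d]
  rw [hy, mulVec_add]
  simp only [add_dotProduct, dotProduct_add]
  rw [hsymm, hd]
  ring

lemma dotProduct_mulVec_le_of_mulVec_eq_const (hM : M.PosSemidef)
    (hMx : M *ᵥ x = fun _ ↦ c) (hsum : ∑ i, y i = ∑ i, x i) :
    x ⬝ᵥ (M *ᵥ x) ≤ y ⬝ᵥ (M *ᵥ y) := by
  rw [dotProduct_mulVec_eq_add_of_mulVec_eq_const (isHermitian_iff_isSymm.mp hM.isHermitian) hMx
    hsum]
  simpa using hM.dotProduct_mulVec_nonneg (y - x)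

lemma eq_of_dotProduct_mulVec_le_of_mulVec_eq_const (hM : M.PosDef)
    (hMx : M *ᵥ x = fun _ ↦ c) (hsum : ∑ i, y i = ∑ i, x i)
    (hle : y ⬝ᵥ (M *ᵥ y) ≤ x ⬝ᵥ (M *ᵥ x)) : y = x := by
  rw [dotProduct_mulVec_eq_add_of_mulVec_eq_const (isHermitian_iff_isSymm.mp hM.isHermitian) hMx
    hsum] at hle
  by_contra hne
  have hpos := hM.dotProduct_mulVec_pos (sub_ne_zero.mpr hne)
  rw [star_trivial] at hpos
  linarith

end MinimizerOnHyperplane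

open Real
open scoped goldenRatio

lemma lt_one_sub_inv_goldenRatio_iff {p : ℝ} : p < 1 - 1 / φ ↔ p * φ ^ 2 < 1 := by
  have h : 1 - 1 / φ = 1 / φ ^ 2 := by
    rw [one_div, one_div, ← inv_pow, inv_goldenRatio, neg_sq, goldenConj_sq]
    ring
  rw [h, lt_div_iff₀ (pow_pos goldenRatio_pos 2)]

def path4Matrix (p : ℝ) : Matrix (Fin 4) (Fin 4) ℝ :=
  !![1 - p, p, 0, 0; p, 1 - p, p, 0; 0, p, 1 - p, p; 0, 0, p, 1 - p]

lemma path4Matrix_isSymm (p : ℝ) : (path4Matrix p).IsSymm := by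
  ext i j
  fin_cases i <;> fin_cases j <;> rfl

/-- `1 - p φ²` is the least eigenvalue of `path4Matrix p`, the adjacency spectrum of `P₄` being
`±φ, ±φ⁻¹`. -/
lemma path4Matrix_dotProduct_mulVec (p : ℝ) (v : Fin 4 → ℝ) :
    v ⬝ᵥ (path4Matrix p *ᵥ v) = (1 - p * φ ^ 2) * (v ⬝ᵥ v) + p * φ * (v 0 + (φ - 1) * v 1) ^ 2
      + p * (v 1 + v 2) ^ 2 + p * (φ - 1) * (v 2 + φ * v 3) ^ 2 := by
  simp only [dotProduct, mulVec, path4Matrix, of_apply, cons_val', cons_val_fin_one,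
    Fin.sum_univ_four, Fin.isValue, cons_val_zero, cons_val_one, cons_val, zero_mul, add_zero,
    zero_add]
  linear_combination (-p * (-v 0 ^ 2 + 2 * v 0 * v 1 + (φ - 2) * v 1 ^ 2 - v 2 ^ 2 + 2 * v 2 * v 3
    + (φ - 1) * v 3 ^ 2)) * goldenRatio_sq

lemma path4Matrix_posDef {p : ℝ} (hp₀ : 0 ≤ p) (hp : p * φ ^ 2 < 1) :
    (path4Matrix p).PosDef := by
  refine posDef_iff_dotProduct_mulVec.mpr
    ⟨isHermitian_iff_isSymm.mpr (path4Matrix_isSymm p), fun v hv ↦ ?_⟩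
  rw [star_trivial, path4Matrix_dotProduct_mulVec]
  have hvv : 0 < v ⬝ᵥ v := by simpa using dotProduct_star_self_pos_iff.mpr hv
  have hmin : 0 < (1 - p * φ ^ 2) * (v ⬝ᵥ v) := mul_pos (by linarith) hvv
  have hφ : 0 ≤ φ - 1 := sub_nonneg.mpr one_lt_goldenRatio.le
  have := goldenRatio_pos
  positivity

noncomputable def path4Equilibrium (p : ℝ) : Fin 4 → ℝ :=
  (4 - 6 * p)⁻¹ • ![1 - p, 1 - 2 * p, 1 - 2 * p, 1 - p]

lemma path4Matrix_mulVec_path4Equilibrium (p : ℝ) :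
    path4Matrix p *ᵥ path4Equilibrium p = fun _ ↦ (4 - 6 * p)⁻¹ * (1 - p - p ^ 2) := by
  ext i
  fin_cases i <;> simp [path4Equilibrium, path4Matrix, mulVec, dotProduct, Fin.sum_univ_four] <;>
    ring

lemma path4Equilibrium_pos {p : ℝ} (hp : p < 1 / 2) (i : Fin 4) : 0 < path4Equilibrium p i := by
  refine mul_pos (inv_pos.mpr (by linarith)) ?_
  fin_cases i <;> simp <;> linarith

lemma sum_path4Equilibrium {p : ℝ} (hp : 4 - 6 * p ≠ 0) : ∑ i, path4Equilibrium p i = 1 := by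
  simp only [path4Equilibrium, Pi.smul_apply, smul_eq_mul, ← Finset.mul_sum]
  rw [inv_mul_eq_one₀ hp]
  simp [Fin.sum_univ_four]
  ring

/-- For `p ∈ (0, 1 - 1/φ)` with `φ` the golden ratio, the quadratic form of
`M = (1-p)I + pA` (with `A` the adjacency matrix of `P₄`) has a unique
minimizer over the standard simplex in `ℝ⁴`, and that minimizer has all four
coordinates strictly positive. -/
theorem p4_is_p_core
    (phi : ℝ) (hphi : phi = (1 + Real.sqrt 5) / 2)
    (p : ℝ) (hp : p ∈ Set.Ioo (0 : ℝ) (1 - 1 / phi))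
    (A : Matrix (Fin 4) (Fin 4) ℝ)
    (hA : ∀ i j : Fin 4, A i j = if (i : ℤ) - j = 1 ∨ (j : ℤ) - i = 1 then 1 else 0)
    (M : Matrix (Fin 4) (Fin 4) ℝ)
    (hMdef : M = (1 - p) • (1 : Matrix (Fin 4) (Fin 4) ℝ) + p • A) :
    ∃ x : Fin 4 → ℝ,
      (x ∈ stdSimplex ℝ (Fin 4) ∧
        ∀ y ∈ stdSimplex ℝ (Fin 4), x ⬝ᵥ (M *ᵥ x) ≤ y ⬝ᵥ (M *ᵥ y)) ∧
      (∀ i : Fin 4, 0 < x i) ∧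
      (∀ z : Fin 4 → ℝ,
        (z ∈ stdSimplex ℝ (Fin 4) ∧
          ∀ y ∈ stdSimplex ℝ (Fin 4), z ⬝ᵥ (M *ᵥ z) ≤ y ⬝ᵥ (M *ᵥ y)) → z = x) := by
  obtain ⟨hp₀, hp₁⟩ := hp
  have hpφ : p * φ ^ 2 < 1 := lt_one_sub_inv_goldenRatio_iff.mp (hphi ▸ hp₁ :)
  have hp_half : p < 1 / 2 := by nlinarith [one_lt_goldenRatio, goldenRatio_sq]
  obtain rfl : M = path4Matrix p := by
    subst hMdef
    ext i j
    fin_cases i <;> fin_cases j <;> norm_num [hA, path4Matrix]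
  have hM := path4Matrix_posDef hp₀.le hpφ
  have hMx := path4Matrix_mulVec_path4Equilibrium p
  have hx : path4Equilibrium p ∈ stdSimplex ℝ (Fin 4) :=
    ⟨fun i ↦ (path4Equilibrium_pos hp_half i).le, sum_path4Equilibrium (by linarith)⟩
  have hsum : ∀ y ∈ stdSimplex ℝ (Fin 4), ∑ i, y i = ∑ i, path4Equilibrium p i :=
    fun y hy ↦ hy.2.trans hx.2.symm
  refine ⟨path4Equilibrium p, ⟨hx, fun y hy ↦ ?_⟩, path4Equilibrium_pos hp_half,
    fun z ⟨hz, hz_min⟩ ↦ ?_⟩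
  · exact dotProduct_mulVec_le_of_mulVec_eq_const hM.posSemidef hMx (hsum y hy)
  · exact eq_of_dotProduct_mulVec_le_of_mulVec_eq_const hM hMx (hsum z hz) (hz_min _ hx)
end
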